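/- Suppose K := A a² + D(b² − c²) < 0 and set k = K/(2Dbc), x̂ = √(1/2 − k²/(2√(k² + k⁴))), and S(k) = (Dbc(k + √(1/(1+k²)) − k³/√(k² + k⁴)) + D c²) / (1/2 − k²/(2√(k² + k⁴))). Then: (i) if A a² + C a² ≤ 2Dbck + D c², then x = 1 is a maximizer of γ on [0,1] and the maximum value is A a² + C a²; (ii) if 2Dbck + D c² < A a² + C a² < S(k), then x = c√D / √((a√C − b√D)² + D c²) is a maximizer of γ on [0,1] and the maximum value is D(A + C)a²c² / ((a√C − b√D)² + D c²); (iii) if A a² + C a² ≥ S(k), then x = x̂ is a maximizer of γ on [0,1] and the maximum value is Dbc(k + √(1/(1+k²)) − k³/√(k² + k⁴)) + D c². -/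

import Mathlib

/-!
In the variable `u = x² − 1/2` one has `x √(1 − x²) = √(1/4 − u²)`, so each branch of `γ` is an
affine function of `u` plus a nonnegative multiple of the concave semicircle `√(1/4 − u²)`.
The second branch `g` is therefore maximal, by Cauchy–Schwarz, at `x̂` (the tangency point
`u = k / (2√(1 + k²))`) and decreasing on `[x̂, 1]`, while `f(x) = (A a² + C a²) x²` is increasing.
If `f ≤ g` at `1` the maximum of `min f g` is at `1`; if `g ≤ f` at `x̂` it is at `x̂`. Otherwise
`f` and `g` cross at the explicit point of case (ii), and this crossing lies beyond `x̂`, since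
`g − f` is concave in `u` and positive both at `0` and at `x̂`.
-/

open Real Set

noncomputable def sqSqrtForm (a b c x : ℝ) : ℝ := a * x ^ 2 + b * x * √(1 - x ^ 2) + c

/-- The paper's `x̂`, whose formula `√(1/2 − k²/(2√(k² + k⁴)))` agrees with this one only for
`k < 0`. -/
noncomputable def peakPoint (k : ℝ) : ℝ := √(1 / 2 + k / (2 * √(1 + k ^ 2)))

noncomputable def crossingPoint (a b c C D : ℝ) : ℝ :=
  c * √D / √((a * √C - b * √D) ^ 2 + D * c ^ 2)

lemma sqrt_quarter_sub_sq_sub_half {x : ℝ} (hx : 0 ≤ x) :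
    √(1 / 4 - (x ^ 2 - 1 / 2) ^ 2) = x * √(1 - x ^ 2) := by
  rw [show 1 / 4 - (x ^ 2 - 1 / 2) ^ 2 = x ^ 2 * (1 - x ^ 2) by ring, sqrt_mul (sq_nonneg x),
    sqrt_sq hx]

lemma concaveOn_sqrt_quarter_sub_sq :
    ConcaveOn ℝ (Icc (-1 / 2) (1 / 2)) fun u : ℝ => √(1 / 4 - u ^ 2) := by
  have hq : ConcaveOn ℝ (Icc (-1 / 2) (1 / 2)) fun u : ℝ => 1 / 4 - u ^ 2 :=
    (concaveOn_const _ (convex_Icc _ _)).sub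
      ((Even.convexOn_pow even_two).subset (subset_univ _) (convex_Icc _ _))
  have hnonneg : ∀ u ∈ Icc (-1 / 2 : ℝ) (1 / 2), 1 / 4 - u ^ 2 ∈ Ici 0 := fun u hu => by
    simp only [mem_Ici, sub_nonneg]
    nlinarith [hu.1, hu.2]
  refine ⟨convex_Icc _ _, fun u hu v hv s t hs ht hst => ?_⟩
  calc s • √(1 / 4 - u ^ 2) + t • √(1 / 4 - v ^ 2)
      ≤ √(s • (1 / 4 - u ^ 2) + t • (1 / 4 - v ^ 2)) :=
        strictConcaveOn_sqrt.concaveOn.2 (hnonneg u hu) (hnonneg v hv) hs ht hst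
    _ ≤ √(1 / 4 - (s • u + t • v) ^ 2) := sqrt_le_sqrt (hq.2 hu hv hs ht hst)

lemma concaveOn_mul_add_mul_sqrt_quarter_sub_sq (a c : ℝ) {b : ℝ} (hb : 0 ≤ b) :
    ConcaveOn ℝ (Icc (-1 / 2) (1 / 2)) fun u : ℝ => a * u + b * √(1 / 4 - u ^ 2) + c := by
  refine ⟨convex_Icc _ _, fun u hu v hv s t hs ht hst => ?_⟩
  have h := concaveOn_sqrt_quarter_sub_sq.2 hu hv hs ht hst
  simp only [smul_eq_mul] at h ⊢
  linear_combination b * h + c * hst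

lemma sqSqrtForm_sub_mul_sq (a b c W x : ℝ) :
    sqSqrtForm (a - W) b c x = sqSqrtForm a b c x - W * x ^ 2 := by
  unfold sqSqrtForm; ring

lemma sqSqrtForm_zero (a b c : ℝ) : sqSqrtForm a b c 0 = c := by simp [sqSqrtForm]

lemma sqSqrtForm_one (a b c : ℝ) : sqSqrtForm a b c 1 = a + c := by simp [sqSqrtForm]

lemma min_sqSqrtForm_le {a b c x y z : ℝ} (hb : 0 ≤ b) (hx : 0 ≤ x) (hxy : x ≤ y) (hyz : y ≤ z)
    (hz : z ≤ 1) : min (sqSqrtForm a b c x) (sqSqrtForm a b c z) ≤ sqSqrtForm a b c y := by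
  have hform : ∀ t, 0 ≤ t → sqSqrtForm a b c t
      = a * (t ^ 2 - 1 / 2) + b * √(1 / 4 - (t ^ 2 - 1 / 2) ^ 2) + (a / 2 + c) := fun t ht => by
    rw [sqrt_quarter_sub_sq_sub_half ht, sqSqrtForm]; ring
  have hmem : ∀ t, 0 ≤ t → t ≤ 1 → t ^ 2 - 1 / 2 ∈ Icc (-1 / 2 : ℝ) (1 / 2) := fun t ht₀ ht₁ =>
    ⟨by nlinarith, by nlinarith⟩
  have hseg : y ^ 2 - 1 / 2 ∈ segment ℝ (x ^ 2 - 1 / 2) (z ^ 2 - 1 / 2) := by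
    rw [segment_eq_Icc (by gcongr; linarith)]
    exact ⟨by gcongr, by gcongr; linarith⟩
  rw [hform x hx, hform y (by linarith), hform z (by linarith)]
  exact (concaveOn_mul_add_mul_sqrt_quarter_sub_sq a (a / 2 + c) hb).ge_on_segment
    (hmem x hx (by linarith)) (hmem z (by linarith) hz) hseg

lemma abs_div_two_sqrt_one_add_sq_lt (k : ℝ) : |k / (2 * √(1 + k ^ 2))| < 1 / 2 := by
  have hk : |k| < √(1 + k ^ 2) := by
    rw [← sqrt_sq_eq_abs]; exact sqrt_lt_sqrt (sq_nonneg k) (by linarith)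
  rw [abs_div, abs_of_pos (by positivity : (0:ℝ) < 2 * √(1 + k ^ 2)), div_lt_iff₀ (by positivity)]
  linarith

lemma peakPoint_sq (k : ℝ) : peakPoint k ^ 2 = 1 / 2 + k / (2 * √(1 + k ^ 2)) :=
  sq_sqrt (by linarith [neg_abs_le (k / (2 * √(1 + k ^ 2))), abs_div_two_sqrt_one_add_sq_lt k])

lemma peakPoint_sq_pos (k : ℝ) : 0 < peakPoint k ^ 2 := by
  rw [peakPoint_sq]
  linarith [neg_abs_le (k / (2 * √(1 + k ^ 2))), abs_div_two_sqrt_one_add_sq_lt k]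

lemma peakPoint_mem_Icc (k : ℝ) : peakPoint k ∈ Icc 0 1 := by
  have h : peakPoint k ^ 2 ≤ 1 := by
    rw [peakPoint_sq]
    linarith [le_abs_self (k / (2 * √(1 + k ^ 2))), abs_div_two_sqrt_one_add_sq_lt k]
  exact ⟨sqrt_nonneg _, (pow_le_one_iff_of_nonneg (sqrt_nonneg _) two_ne_zero).1 h⟩

lemma peakPoint_mul_sqrt_one_sub_sq (k : ℝ) :
    peakPoint k * √(1 - peakPoint k ^ 2) = 1 / (2 * √(1 + k ^ 2)) := by
  have hR2 : √(1 + k ^ 2) ^ 2 = 1 + k ^ 2 := sq_sqrt (by positivity)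
  rw [← sqrt_quarter_sub_sq_sub_half (peakPoint_mem_Icc k).1, peakPoint_sq,
    show 1 / 4 - (1 / 2 + k / (2 * √(1 + k ^ 2)) - 1 / 2) ^ 2 = (1 / (2 * √(1 + k ^ 2))) ^ 2 by
      field_simp; linear_combination 4 * hR2]
  exact sqrt_sq (by positivity)

lemma sqSqrtForm_le {b : ℝ} (hb : 0 ≤ b) (k c : ℝ) {x : ℝ} (hx : x ∈ Icc 0 1) :
    sqSqrtForm (k * b) b c x ≤ b * (k + √(1 + k ^ 2)) / 2 + c := by
  unfold sqSqrtForm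
  set s := √(1 - x ^ 2)
  have hs : s ^ 2 = 1 - x ^ 2 := sq_sqrt (by nlinarith [hx.1, hx.2])
  have hde : (x ^ 2 - s ^ 2) ^ 2 + (2 * x * s) ^ 2 = 1 := by
    linear_combination (x ^ 2 + s ^ 2 + 1) * hs
  have hcs : k * (x ^ 2 - s ^ 2) + 2 * x * s ≤ √(1 + k ^ 2) :=
    (le_abs_self _).trans (abs_le_sqrt (by
      linear_combination (1 + k ^ 2) * hde + sq_nonneg (k * (2 * x * s) - (x ^ 2 - s ^ 2))))
  rw [hs] at hcs
  linarith [mul_le_mul_of_nonneg_left hcs hb]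

lemma sqSqrtForm_peakPoint (k b c : ℝ) :
    sqSqrtForm (k * b) b c (peakPoint k) = b * (k + √(1 + k ^ 2)) / 2 + c := by
  have hR2 : √(1 + k ^ 2) ^ 2 = 1 + k ^ 2 := sq_sqrt (by positivity)
  rw [sqSqrtForm, mul_assoc b, peakPoint_mul_sqrt_one_sub_sq, peakPoint_sq]
  field_simp
  linear_combination (-b) * hR2

lemma sqSqrtForm_antitoneOn {b : ℝ} (hb : 0 ≤ b) (k c : ℝ) :
    AntitoneOn (sqSqrtForm (k * b) b c) (Icc (peakPoint k) 1) := fun y hy z hz hyz => by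
  have h := min_sqSqrtForm_le (a := k * b) (c := c) hb (peakPoint_mem_Icc k).1 hy.1 hyz hz.2
  rwa [min_eq_right (by
    rw [sqSqrtForm_peakPoint]
    exact sqSqrtForm_le hb k c ⟨(peakPoint_mem_Icc k).1.trans (hy.1.trans hyz), hz.2⟩)] at h

lemma le_of_sqSqrtForm_eq_zero {a b c p x : ℝ} (hb : 0 ≤ b) (hc : 0 < c) (hp : p ≤ 1) (hx : 0 ≤ x)
    (hpos : 0 < sqSqrtForm a b c p) (hzero : sqSqrtForm a b c x = 0) : p ≤ x := by
  by_contra! hxp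
  have h := min_sqSqrtForm_le (a := a) (c := c) hb le_rfl hx hxp.le hp
  rw [sqSqrtForm_zero, hzero] at h
  exact (lt_min hc hpos).not_ge h

section MinOfMax

variable {α β : Type*} [LinearOrder β] {f g : α → β} {s : Set α} {a : α}

lemma isMaxOn_min_of_isMaxOn_left (hf : IsMaxOn f s a) (h : f a ≤ g a) :
    IsMaxOn (fun x => min (f x) (g x)) s a :=
  isMaxOn_iff.2 fun x hx =>
    (min_le_left _ _).trans ((isMaxOn_iff.1 hf x hx).trans (le_min le_rfl h))

lemma isMaxOn_min_of_isMaxOn_right (hg : IsMaxOn g s a) (h : g a ≤ f a) :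
    IsMaxOn (fun x => min (f x) (g x)) s a :=
  isMaxOn_iff.2 fun x hx =>
    (min_le_right _ _).trans ((isMaxOn_iff.1 hg x hx).trans (le_min h le_rfl))

lemma isMaxOn_min_of_crossing [LinearOrder α] (hf : ∀ x ∈ s, x ≤ a → f x ≤ f a)
    (hg : ∀ x ∈ s, a ≤ x → g x ≤ g a) (h : f a = g a) :
    IsMaxOn (fun x => min (f x) (g x)) s a := isMaxOn_iff.2 fun x hx => by
  rcases le_total x a with hxa | hax
  · exact (min_le_left _ _).trans ((hf x hx hxa).trans (le_min le_rfl h.le))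
  · exact (min_le_right _ _).trans ((hg x hx hax).trans (le_min h.ge le_rfl))

end MinOfMax

section Objective

variable {W k L N : ℝ}

lemma isMaxOn_mul_sq_one (hW : 0 ≤ W) : IsMaxOn (fun x => W * x ^ 2) (Icc 0 1) 1 :=
  isMaxOn_iff.2 fun x hx => by
    rw [one_pow, mul_one]
    exact mul_le_of_le_one_right hW (pow_le_one₀ hx.1 hx.2)

lemma isMaxOn_min_one (hW : 0 ≤ W) (h : W ≤ k * L + N) :
    IsMaxOn (fun x => min (W * x ^ 2) (sqSqrtForm (k * L) L N x)) (Icc 0 1) 1 ∧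
      min (W * 1 ^ 2) (sqSqrtForm (k * L) L N 1) = W := by
  have h1 : W * 1 ^ 2 ≤ sqSqrtForm (k * L) L N 1 := by rwa [sqSqrtForm_one, one_pow, mul_one]
  refine ⟨isMaxOn_min_of_isMaxOn_left (isMaxOn_mul_sq_one hW) h1, ?_⟩
  rw [min_eq_left h1, one_pow, mul_one]

lemma isMaxOn_min_peakPoint (hL : 0 ≤ L)
    (h : L * (k + √(1 + k ^ 2)) / 2 + N ≤ W * peakPoint k ^ 2) :
    IsMaxOn (fun x => min (W * x ^ 2) (sqSqrtForm (k * L) L N x)) (Icc 0 1) (peakPoint k) ∧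
      min (W * peakPoint k ^ 2) (sqSqrtForm (k * L) L N (peakPoint k))
        = L * (k + √(1 + k ^ 2)) / 2 + N := by
  rw [← sqSqrtForm_peakPoint] at h
  refine ⟨isMaxOn_min_of_isMaxOn_right (isMaxOn_iff.2 fun x hx => ?_) h,
    (min_eq_right h).trans (sqSqrtForm_peakPoint k L N)⟩
  rw [sqSqrtForm_peakPoint]
  exact sqSqrtForm_le hL k N hx

lemma isMaxOn_min_of_sqSqrtForm_eq_zero (hW : 0 ≤ W) (hL : 0 ≤ L) (hN : 0 < N) {x : ℝ}
    (hx : x ∈ Icc 0 1) (hpeak : W * peakPoint k ^ 2 < L * (k + √(1 + k ^ 2)) / 2 + N)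
    (hcross : sqSqrtForm (k * L - W) L N x = 0) :
    IsMaxOn (fun y => min (W * y ^ 2) (sqSqrtForm (k * L) L N y)) (Icc 0 1) x ∧
      min (W * x ^ 2) (sqSqrtForm (k * L) L N x) = W * x ^ 2 := by
  have hpeak_le : peakPoint k ≤ x := by
    refine le_of_sqSqrtForm_eq_zero hL hN (peakPoint_mem_Icc k).2 hx.1 ?_ hcross
    rw [sqSqrtForm_sub_mul_sq, sqSqrtForm_peakPoint]
    linarith
  rw [sqSqrtForm_sub_mul_sq, sub_eq_zero] at hcross
  refine ⟨isMaxOn_min_of_crossing (fun y hy hyx => ?_) (fun y hy hxy => ?_) hcross.symm,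
    by rw [hcross, min_self]⟩
  · exact mul_le_mul_of_nonneg_left (pow_le_pow_left₀ hy.1 hyx 2) hW
  · exact sqSqrtForm_antitoneOn hL k N ⟨hpeak_le, hx.2⟩ ⟨hpeak_le.trans hxy, hy.2⟩ hxy

end Objective

section CrossingPoint

variable {a b c C D : ℝ}

lemma crossingPoint_sq (hD : 0 ≤ D) :
    crossingPoint a b c C D ^ 2 = D * c ^ 2 / ((a * √C - b * √D) ^ 2 + D * c ^ 2) := by
  rw [crossingPoint, div_pow, mul_pow, sq_sqrt hD, sq_sqrt (by positivity), mul_comm]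

lemma crossingPoint_mem_Icc (hc : 0 ≤ c) (hD : 0 ≤ D) : crossingPoint a b c C D ∈ Icc 0 1 := by
  have h : crossingPoint a b c C D ^ 2 ≤ 1 := by
    rw [crossingPoint_sq hD]
    exact div_le_one_of_le₀ (le_add_of_nonneg_left (sq_nonneg _)) (by positivity)
  have h0 : 0 ≤ crossingPoint a b c C D := by unfold crossingPoint; positivity
  exact ⟨h0, (pow_le_one_iff_of_nonneg h0 two_ne_zero).1 h⟩

lemma sqSqrtForm_crossingPoint (ha : 0 ≤ a) (hb : 0 ≤ b) (hc : 0 < c) (hC : 0 ≤ C) (hD : 0 < D)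
    (h : D * b ^ 2 ≤ C * a ^ 2) :
    sqSqrtForm (D * (b ^ 2 - c ^ 2) - C * a ^ 2) (2 * D * b * c) (D * c ^ 2)
      (crossingPoint a b c C D) = 0 := by
  have ht : 0 ≤ a * √C - b * √D := by
    rw [sub_nonneg, mul_comm b, mul_comm a, ← sqrt_sq ha, ← sqrt_sq hb, ← sqrt_mul hD.le,
      ← sqrt_mul hC]
    exact sqrt_le_sqrt (by linarith)
  have hx2 := crossingPoint_sq (a := a) (b := b) (c := c) (C := C) hD.le
  set E := (a * √C - b * √D) ^ 2 + D * c ^ 2 with hE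
  have hE0 : 0 < E := by positivity
  have hprod : crossingPoint a b c C D * √(1 - crossingPoint a b c C D ^ 2)
      = c * √D * (a * √C - b * √D) / E := by
    rw [hx2, show 1 - D * c ^ 2 / E = (a * √C - b * √D) ^ 2 / E by field_simp; ring,
      sqrt_div (sq_nonneg _), sqrt_sq ht, crossingPoint, div_mul_div_comm, mul_self_sqrt hE0.le]
  clear_value E
  rw [sqSqrtForm, mul_assoc (2 * D * b * c), hprod, hx2]
  field_simp
  linear_combination (D * c ^ 2) * hE + (D * c ^ 2 * a ^ 2) * sq_sqrt hC
    - (D * c ^ 2 * b ^ 2) * sq_sqrt hD.le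

end CrossingPoint

section NegativeK

variable {k : ℝ}

lemma sqrt_sq_add_pow_four_of_neg (hk : k < 0) : √(k ^ 2 + k ^ 4) = -k * √(1 + k ^ 2) := by
  rw [show k ^ 2 + k ^ 4 = k ^ 2 * (1 + k ^ 2) by ring, sqrt_mul (sq_nonneg k), sqrt_sq_eq_abs,
    abs_of_neg hk]

lemma one_half_sub_sq_div_sqrt_of_neg (hk : k < 0) :
    1 / 2 - k ^ 2 / (2 * √(k ^ 2 + k ^ 4)) = peakPoint k ^ 2 := by
  rw [peakPoint_sq, sqrt_sq_add_pow_four_of_neg hk]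
  field_simp
  ring

lemma add_sqrt_inv_sub_div_sqrt_of_neg (hk : k < 0) :
    k + √(1 / (1 + k ^ 2)) - k ^ 3 / √(k ^ 2 + k ^ 4) = k + √(1 + k ^ 2) := by
  rw [sqrt_sq_add_pow_four_of_neg hk, one_div, sqrt_inv]
  field_simp
  linear_combination -sq_sqrt (by positivity : (0 : ℝ) ≤ 1 + k ^ 2)

end NegativeK

/-- Theorem 3 (Scenario `K = A a² + D(b² − c²) < 0`) of the suboptimal energy-beamforming
problem `P5`: the maximizer of
`γ(x) = min ((A a² + C a²) x², (A a² + D(b² − c²)) x² + 2 D b c x √(1 − x²) + D c²)`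
over `[0,1]` in the three cases, with `k = K/(2Dbc)`,
`x̂ = √(1/2 − k²/(2√(k² + k⁴)))` and threshold `S(k)`. -/
theorem beamforming_scenario_neg (a b c A C D : ℝ)
    (ha : 0 < a) (hb : 0 < b) (hc : 0 < c) (hA : 0 < A) (hC : 0 < C) (hD : 0 < D)
    (hK : A * a ^ 2 + D * (b ^ 2 - c ^ 2) < 0) :
    (let γ : ℝ → ℝ := fun x =>
      min ((A * a ^ 2 + C * a ^ 2) * x ^ 2)
        ((A * a ^ 2 + D * (b ^ 2 - c ^ 2)) * x ^ 2
          + 2 * D * b * c * x * Real.sqrt (1 - x ^ 2) + D * c ^ 2);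
    let k : ℝ := (A * a ^ 2 + D * (b ^ 2 - c ^ 2)) / (2 * D * b * c);
    let xhat : ℝ := Real.sqrt (1 / 2 - k ^ 2 / (2 * Real.sqrt (k ^ 2 + k ^ 4)));
    let S : ℝ := (D * b * c * (k + Real.sqrt (1 / (1 + k ^ 2))
        - k ^ 3 / Real.sqrt (k ^ 2 + k ^ 4)) + D * c ^ 2)
      / (1 / 2 - k ^ 2 / (2 * Real.sqrt (k ^ 2 + k ^ 4)));
    (A * a ^ 2 + C * a ^ 2 ≤ 2 * D * b * c * k + D * c ^ 2 →
      (1 : ℝ) ∈ Set.Icc (0:ℝ) 1 ∧ IsMaxOn γ (Set.Icc (0:ℝ) 1) 1 ∧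
      γ 1 = A * a ^ 2 + C * a ^ 2) ∧
    (2 * D * b * c * k + D * c ^ 2 < A * a ^ 2 + C * a ^ 2 ∧ A * a ^ 2 + C * a ^ 2 < S →
      c * Real.sqrt D / Real.sqrt ((a * Real.sqrt C - b * Real.sqrt D) ^ 2 + D * c ^ 2)
        ∈ Set.Icc (0:ℝ) 1 ∧
      IsMaxOn γ (Set.Icc (0:ℝ) 1)
        (c * Real.sqrt D / Real.sqrt ((a * Real.sqrt C - b * Real.sqrt D) ^ 2 + D * c ^ 2)) ∧
      γ (c * Real.sqrt D / Real.sqrt ((a * Real.sqrt C - b * Real.sqrt D) ^ 2 + D * c ^ 2))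
        = D * (A + C) * a ^ 2 * c ^ 2
            / ((a * Real.sqrt C - b * Real.sqrt D) ^ 2 + D * c ^ 2)) ∧
    (S ≤ A * a ^ 2 + C * a ^ 2 →
      xhat ∈ Set.Icc (0:ℝ) 1 ∧ IsMaxOn γ (Set.Icc (0:ℝ) 1) xhat ∧
      γ xhat = D * b * c * (k + Real.sqrt (1 / (1 + k ^ 2))
        - k ^ 3 / Real.sqrt (k ^ 2 + k ^ 4)) + D * c ^ 2)) := by
  intro γ k xhat S
  have hL : 0 < 2 * D * b * c := by positivity
  have hk : k < 0 := div_neg_of_neg_of_pos hK hL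
  have hkL : k * (2 * D * b * c) = A * a ^ 2 + D * (b ^ 2 - c ^ 2) := div_mul_cancel₀ _ hL.ne'
  have hγ : γ = fun x => min ((A * a ^ 2 + C * a ^ 2) * x ^ 2)
      (sqSqrtForm (k * (2 * D * b * c)) (2 * D * b * c) (D * c ^ 2) x) := by
    rw [hkL]; rfl
  have hxhat : xhat = peakPoint k := by
    simp only [xhat, one_half_sub_sq_div_sqrt_of_neg hk, sqrt_sq (peakPoint_mem_Icc k).1]
  have hvalue : D * b * c * (k + √(1 / (1 + k ^ 2)) - k ^ 3 / √(k ^ 2 + k ^ 4)) + D * c ^ 2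
      = 2 * D * b * c * (k + √(1 + k ^ 2)) / 2 + D * c ^ 2 := by
    rw [add_sqrt_inv_sub_div_sqrt_of_neg hk]; ring
  have hS : S = (2 * D * b * c * (k + √(1 + k ^ 2)) / 2 + D * c ^ 2) / peakPoint k ^ 2 := by
    simp only [S, hvalue, one_half_sub_sq_div_sqrt_of_neg hk]
  have hxs : c * √D / √((a * √C - b * √D) ^ 2 + D * c ^ 2) = crossingPoint a b c C D := rfl
  rw [hγ, hxhat, hS, hvalue, hxs, lt_div_iff₀ (peakPoint_sq_pos k),
    div_le_iff₀ (peakPoint_sq_pos k)]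
  have hW : 0 ≤ A * a ^ 2 + C * a ^ 2 := by positivity
  refine ⟨fun h => ⟨⟨zero_le_one, le_rfl⟩, isMaxOn_min_one hW (by linarith)⟩,
    fun ⟨h₁, h₂⟩ => ⟨crossingPoint_mem_Icc hc.le hD.le, ?_⟩,
    fun h => ⟨peakPoint_mem_Icc k, isMaxOn_min_peakPoint hL.le h⟩⟩
  have hcross : sqSqrtForm (k * (2 * D * b * c) - (A * a ^ 2 + C * a ^ 2)) (2 * D * b * c)
      (D * c ^ 2) (crossingPoint a b c C D) = 0 := by
    rw [hkL, show A * a ^ 2 + D * (b ^ 2 - c ^ 2) - (A * a ^ 2 + C * a ^ 2)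
      = D * (b ^ 2 - c ^ 2) - C * a ^ 2 by ring]
    exact sqSqrtForm_crossingPoint ha.le hb.le hc hC.le hD (by linarith)
  refine (isMaxOn_min_of_sqSqrtForm_eq_zero hW hL.le (by positivity)
    (crossingPoint_mem_Icc hc.le hD.le) h₂ hcross).imp_right fun hmin => ?_
  exact hmin.trans (by rw [crossingPoint_sq hD.le]; ring)
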